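/- arXiv:2605.14666 — 2 statements merged into one kernel-verified Lean document; each statement's English description precedes it below -/
import Mathlib

section
/- Regression over words characterizes trace continuations (soundness direction): let pre(ε) = ⊤ and pre(ς·w) = regress(pre(w), ς). If M, α ⊨ pre(w) for a word w of constraints, then there exists a finite sequence of assignments α₁, …, α_n (n = length of w) such that M under the combined assignment ⟨α, α₁⟩ satisfies the first constraint of w, and for each i, M under ⟨α_i, α_{i+1}⟩ satisfies the (i+1)-th constraint of w. -/
open FirstOrder Language

variable {L : Language} {V : Type*}

/-- The regression operation `regress(φ, ς) = ∃Y. ς[V^◁ := V, V := Y] ∧ φ[V := Y]`. -/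
def regressF (n : ℕ) (e : V ≃ Fin n) (φ : L.Formula V) (ς : L.Formula (V ⊕ V)) :
    L.Formula V :=
  (BoundedFormula.relabel (Sum.elim Sum.inl (fun v => Sum.inr (e v))) ς ⊓
    BoundedFormula.relabel (fun v => Sum.inr (e v)) φ).exs

/-- The regression constraint of a word of constraints:
`pre [] = ⊤` and `pre (ς :: w) = regress (pre w) ς`. -/
def preW (n : ℕ) (e : V ≃ Fin n) : List (L.Formula (V ⊕ V)) → L.Formula V
  | [] => ⊤
  | ς :: w => regressF n e (preW n e w) ς

lemma realize_regressF {M : Type*} [L.Structure M] (n : ℕ) (e : V ≃ Fin n)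
    (φ : L.Formula V) (ς : L.Formula (V ⊕ V)) (α : V → M) :
    (regressF n e φ ς).Realize α ↔
      ∃ β : V → M, ς.Realize (Sum.elim α β) ∧ φ.Realize β := by
  simp only [regressF, BoundedFormula.realize_exs,
    BoundedFormula.realize_inf, BoundedFormula.realize_relabel]
  constructor
  · rintro ⟨xs, h1, h2⟩
    refine ⟨fun v => xs (Fin.castAdd 0 (e v)), ?_, ?_⟩
    · rw [Subsingleton.elim (xs ∘ Fin.natAdd n) (default : Fin 0 → M)] at h1
      have hv : (Sum.elim α (xs ∘ Fin.castAdd 0) ∘ Sum.elim Sum.inl fun v => Sum.inr (e v))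
          = Sum.elim α (fun v => xs (Fin.castAdd 0 (e v))) := by
        funext x; cases x <;> rfl
      rw [hv] at h1
      exact h1
    · rw [Subsingleton.elim (xs ∘ Fin.natAdd n) (default : Fin 0 → M)] at h2
      exact h2
  · rintro ⟨β, h1, h2⟩
    refine ⟨fun i => β (e.symm (Fin.cast (Nat.add_zero n) i)), ?_, ?_⟩
    · rw [Subsingleton.elim (_ ∘ Fin.natAdd n) (default : Fin 0 → M)]
      have hv : (Sum.elim α ((fun i => β (e.symm (Fin.cast (Nat.add_zero n) i))) ∘ Fin.castAdd 0)
          ∘ Sum.elim Sum.inl fun v => Sum.inr (e v)) = Sum.elim α β := by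
        funext x; cases x <;> simp
      rw [hv]
      exact h1
    · rw [Subsingleton.elim (_ ∘ Fin.natAdd n) (default : Fin 0 → M)]
      have hv : (Sum.elim α ((fun i => β (e.symm (Fin.cast (Nat.add_zero n) i))) ∘ Fin.castAdd 0)
          ∘ fun v => Sum.inr (e v)) = β := by
        funext v; simp
      rw [hv]
      exact h2

/-- Soundness of regression over words: if `M, α ⊨ pre w`, there is a sequence of
assignments `as 0 = α, as 1, …, as (length w)` such that each consecutive combined
assignment `⟨as i, as (i+1)⟩` satisfies the `i`-th constraint of `w`. -/
theorem stmt12 {M : Type*} [L.Structure M] (n : ℕ) (e : V ≃ Fin n)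
    (w : List (L.Formula (V ⊕ V))) (α : V → M)
    (h : (preW n e w).Realize α) :
    ∃ as : Fin (w.length + 1) → (V → M), as 0 = α ∧
      ∀ i : Fin w.length,
        (w.get i).Realize (Sum.elim (as i.castSucc) (as i.succ)) := by
  induction w generalizing α with
  | nil => exact ⟨fun _ => α, rfl, fun i => i.elim0⟩
  | cons ς w ih =>
    rw [preW, realize_regressF] at h
    obtain ⟨β, hς, hpre⟩ := h
    obtain ⟨as', h0, hstep⟩ := ih β hpre
    refine ⟨Fin.cons α as', Fin.cons_zero _ _, fun i => ?_⟩
    refine Fin.cases ?_ (fun j => ?_) i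
    · simpa [Fin.succ_castSucc, h0] using hς
    · have h1 : (j.succ.castSucc : Fin (w.length + 2)) = j.castSucc.succ :=
        (Fin.succ_castSucc j).symm
      simpa [h1, Fin.cons_succ] using hstep j
end

section
/- Regression over words characterizes trace continuations (completeness direction): with pre defined as pre([]) = ⊤ and pre(ς :: w) = regress(pre(w), ς), if there exists a sequence of assignments α₁, …, α_n in M such that consecutive combined assignments satisfy the corresponding constraints of the word w = ς₁…ς_n (i.e., M, ⟨α, α₁⟩ ⊨ ς₁ and M, ⟨α_i, α_{i+1}⟩ ⊨ ς_{i+1} for all i), then M, α ⊨ pre(w). -/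
open FirstOrder Language

variable {L : Language} {V : Type*}

/-- Completeness of regression over words: if there is a sequence of assignments
`as 0 = α, as 1, …, as (length w)` whose consecutive combined assignments satisfy
the corresponding constraints of `w`, then `M, α ⊨ pre w`. -/
theorem stmt13 {M : Type*} [L.Structure M] (n : ℕ) (e : V ≃ Fin n)
    (w : List (L.Formula (V ⊕ V))) (α : V → M)
    (as : Fin (w.length + 1) → (V → M)) (h0 : as 0 = α)
    (hchain : ∀ i : Fin w.length,
      (w.get i).Realize (Sum.elim (as i.castSucc) (as i.succ))) :
    (preW n e w).Realize α := by
    induction w generalizing α with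
  | nil => simp [preW]
  | cons ς w ih =>
    rw [preW, regressF]
    refine BoundedFormula.realize_exs.mpr ⟨fun j => as 1 (e.symm j), ?_⟩
    rw [BoundedFormula.realize_inf, BoundedFormula.realize_relabel,
      BoundedFormula.realize_relabel]
    constructor
    · have h := hchain ⟨0, Nat.succ_pos _⟩
      unfold Formula.Realize at h
      convert h using 2
      · rfl
      · funext x
        cases x with
        | inl v => exact congrFun h0.symm v
        | inr v => simp
    · have hIH := ih (as 1) (fun i => as i.succ) rfl (fun i => hchain i.succ)
      unfold Formula.Realize at hIH
      convert hIH using 2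
      · funext v
        simp
end
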